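/- Let n ≥ 3, μ a finite positive Borel measure with compact support in the hyperplane ℝ^{n-1} = {x_n = 0}, a ∈ ℝ^{n-1}, and R > 0. Then the function x' ↦ U^μ(x', √(R² − |x'−a|²)), the restriction of the Newtonian potential U^μ(x) = c_n ∫ |x−y|^{2−n} dμ(y) (with c_n = 1/((n−2)|S^{n-1}|)) to the upper hemisphere of the sphere of center (a,0) and radius R, expressed as a function of x' ∈ B(a,R) ⊂ ℝ^{n-1}, is convex. -/

import Mathlib

open MeasureTheory

noncomputable def stmt18.toE {k : ℕ} (f : Fin k → ℝ) : EuclideanSpace ℝ (Fin k) :=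
  (WithLp.equiv 2 (Fin k → ℝ)).symm f

noncomputable def stmt18.fromE {k : ℕ} (x : EuclideanSpace ℝ (Fin k)) : Fin k → ℝ :=
  WithLp.equiv 2 (Fin k → ℝ) x

/-!
On the sphere of center `(a, 0)` and radius `R`, the squared distance from the point over `x'` to a
point `(y', 0)` of the hyperplane is `R² + ‖y' - a‖² - 2⟪x' - a, y' - a⟫`, an affine function of `x'`.
The kernel `|x - y|^{2-n}` is this affine function raised to the power `(2 - n)/2 ≤ 0`, and
`t ↦ t ^ p` is convex on `(0, ∞)` for `p ≤ 0`; integrating convex functions against `μ` keeps convexity.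
-/

open Set Real Metric

theorem convexOn_rpow_of_nonpos {p : ℝ} (hp : p ≤ 0) : ConvexOn ℝ (Ioi 0) fun x : ℝ => x ^ p := by
  refine ⟨convex_Ioi 0, fun x hx y hy a b ha hb hab => ?_⟩
  have hlog := strictConcaveOn_log_Ioi.concaveOn.2 hx hy ha hb hab
  have hxy : 0 < a • x + b • y := convex_Ioi 0 hx hy ha hb hab
  simp only [smul_eq_mul] at hlog hxy ⊢
  calc (a * x + b * y) ^ p = exp (log (a * x + b * y) * p) := rpow_def_of_pos hxy _
    _ ≤ exp (a * (log x * p) + b * (log y * p)) := by gcongr; nlinarith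
    _ ≤ a * exp (log x * p) + b * exp (log y * p) := by
        simpa only [smul_eq_mul] using convexOn_exp.2 (mem_univ _) (mem_univ _) ha hb hab
    _ = a * x ^ p + b * y ^ p := by rw [rpow_def_of_pos hx, rpow_def_of_pos hy]

section Hemisphere

variable {E : Type*} [NormedAddCommGroup E]

/-- Squared distance from the point `(x, √(R² - ‖x - a‖²))` of the hemisphere over `x` to the
point `(y, 0)` of the hyperplane. -/
def hemisphereSqDist (a : E) (R : ℝ) (x y : E) : ℝ := ‖x - y‖ ^ 2 + (R ^ 2 - ‖x - a‖ ^ 2)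

theorem sub_sq_norm_le_hemisphereSqDist (a : E) (R : ℝ) (x y : E) :
    R ^ 2 - ‖x - a‖ ^ 2 ≤ hemisphereSqDist a R x y :=
  le_add_of_nonneg_left (sq_nonneg _)

theorem sub_sq_norm_pos_of_mem_ball {a x : E} {R : ℝ} (hx : x ∈ ball a R) :
    0 < R ^ 2 - ‖x - a‖ ^ 2 := by
  rw [mem_ball, dist_eq_norm] at hx
  nlinarith [norm_nonneg (x - a)]

theorem hemisphereSqDist_pos {a x : E} {R : ℝ} (hx : x ∈ ball a R) (y : E) :
    0 < hemisphereSqDist a R x y :=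
  (sub_sq_norm_pos_of_mem_ball hx).trans_le (sub_sq_norm_le_hemisphereSqDist a R x y)

theorem continuous_hemisphereSqDist_rpow {a x : E} {R : ℝ} (hx : x ∈ ball a R) (p : ℝ) :
    Continuous fun y => hemisphereSqDist a R x y ^ p := by
  refine Continuous.rpow_const ?_ fun y => Or.inl (hemisphereSqDist_pos hx y).ne'
  unfold hemisphereSqDist
  fun_prop

theorem integrable_hemisphereSqDist_rpow [MeasurableSpace E] [BorelSpace E] (ν : Measure E)
    [IsFiniteMeasure ν] {a x : E} {R : ℝ} (hx : x ∈ ball a R) {p : ℝ} (hp : p ≤ 0) :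
    Integrable (fun y => hemisphereSqDist a R x y ^ p) ν := by
  refine .of_bound (continuous_hemisphereSqDist_rpow hx p).aestronglyMeasurable
    ((R ^ 2 - ‖x - a‖ ^ 2) ^ p) (ae_of_all _ fun y => ?_)
  rw [norm_of_nonneg (rpow_nonneg (hemisphereSqDist_pos hx y).le _)]
  exact rpow_le_rpow_of_nonpos (sub_sq_norm_pos_of_mem_ball hx)
    (sub_sq_norm_le_hemisphereSqDist a R x y) hp

variable [InnerProductSpace ℝ E]

theorem hemisphereSqDist_eq (a : E) (R : ℝ) (x y : E) :
    hemisphereSqDist a R x y = R ^ 2 + ‖y - a‖ ^ 2 - 2 * inner ℝ (x - a) (y - a) := by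
  have h : x - y = (x - a) - (y - a) := by abel
  rw [hemisphereSqDist, h, norm_sub_sq_real]
  ring

theorem hemisphereSqDist_add_smul {a : E} {R : ℝ} (x z y : E) {s t : ℝ} (hst : s + t = 1) :
    hemisphereSqDist a R (s • x + t • z) y
      = s * hemisphereSqDist a R x y + t * hemisphereSqDist a R z y := by
  have h : s • x + t • z - a = s • (x - a) + t • (z - a) := by
    rw [smul_sub, smul_sub, ← sub_eq_zero]
    linear_combination (norm := module) hst • a
  simp only [hemisphereSqDist_eq, h, inner_add_left, inner_smul_left, RCLike.conj_to_real]
  linear_combination -(R ^ 2 + ‖y - a‖ ^ 2) * hst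

theorem convexOn_hemisphereSqDist_rpow (a : E) (R : ℝ) (y : E) {p : ℝ} (hp : p ≤ 0) :
    ConvexOn ℝ (ball a R) fun x => hemisphereSqDist a R x y ^ p := by
  refine ⟨convex_ball a R, fun x hx z hz s t hs ht hst => ?_⟩
  simp only [smul_eq_mul, hemisphereSqDist_add_smul x z y hst]
  exact (convexOn_rpow_of_nonpos hp).2 (hemisphereSqDist_pos hx y) (hemisphereSqDist_pos hz y)
    hs ht hst

theorem convexOn_integral_hemisphereSqDist_rpow [MeasurableSpace E] [BorelSpace E]
    (ν : Measure E) [IsFiniteMeasure ν] (a : E) (R : ℝ) {p : ℝ} (hp : p ≤ 0) :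
    ConvexOn ℝ (ball a R) fun x => ∫ y, hemisphereSqDist a R x y ^ p ∂ν :=
  integral_convexOn_of_integrand_ae (convex_ball a R)
    (ae_of_all _ fun y => convexOn_hemisphereSqDist_rpow a R y hp)
    fun _ hx => integrable_hemisphereSqDist_rpow ν hx hp

end Hemisphere

section Coordinates

variable {m : ℕ}

noncomputable def hyperplaneProj (y : EuclideanSpace ℝ (Fin (m + 1))) :
    EuclideanSpace ℝ (Fin m) :=
  stmt18.toE (Fin.init (stmt18.fromE y))

theorem continuous_hyperplaneProj : Continuous (hyperplaneProj (m := m)) :=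
  (PiLp.continuous_toLp 2 _).comp
    (continuous_pi fun i => PiLp.continuous_apply 2 _ (Fin.castSucc i))

theorem norm_toE_snoc_sub_sq (x : EuclideanSpace ℝ (Fin m)) (h : ℝ)
    {y : EuclideanSpace ℝ (Fin (m + 1))} (hy : y (Fin.last m) = 0) :
    ‖stmt18.toE (Fin.snoc (stmt18.fromE x) h) - y‖ ^ 2 = ‖x - hyperplaneProj y‖ ^ 2 + h ^ 2 := by
  simp [EuclideanSpace.real_norm_sq_eq, Fin.sum_univ_castSucc, hyperplaneProj, stmt18.toE,
    stmt18.fromE, Fin.init, hy]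

theorem norm_toE_snoc_sub_rpow {a x : EuclideanSpace ℝ (Fin m)} {R : ℝ} (hx : x ∈ closedBall a R)
    {y : EuclideanSpace ℝ (Fin (m + 1))} (hy : y (Fin.last m) = 0) (q : ℝ) :
    ‖stmt18.toE (Fin.snoc (stmt18.fromE x) (√(R ^ 2 - ‖x - a‖ ^ 2))) - y‖ ^ q
      = hemisphereSqDist a R x (hyperplaneProj y) ^ (q / 2) := by
  have hR : ‖x - a‖ ^ 2 ≤ R ^ 2 := by
    rw [mem_closedBall, dist_eq_norm] at hx
    exact pow_le_pow_left₀ (norm_nonneg _) hx 2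
  have hsq := norm_toE_snoc_sub_sq x (√(R ^ 2 - ‖x - a‖ ^ 2)) hy
  rw [sq_sqrt (sub_nonneg.2 hR)] at hsq
  rw [hemisphereSqDist, ← hsq, rpow_div_two_eq_sqrt _ (sq_nonneg _), sqrt_sq (norm_nonneg _)]

end Coordinates

/-- Here `n = m + 1` and the hyperplane `{x_n = 0}` is spanned by the first `m` coordinates. -/
theorem stmt_18_general {m : ℕ} (hm : 3 ≤ m + 1)
    (μ : Measure (EuclideanSpace ℝ (Fin (m + 1)))) [IsFiniteMeasure μ]
    (hplane : μ {x | ¬ x (Fin.last m) = 0} = 0)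
    (S c : ℝ) (hS : 0 < S) (hc : c = 1 / (((m : ℝ) + 1 - 2) * S))
    (U : EuclideanSpace ℝ (Fin (m + 1)) → ℝ)
    (hU : ∀ x, U x = c * ∫ y, ‖x - y‖ ^ ((2 : ℝ) - ((m : ℝ) + 1)) ∂μ)
    (a : EuclideanSpace ℝ (Fin m)) (R : ℝ) :
    ConvexOn ℝ (Metric.ball a R)
      (fun x' : EuclideanSpace ℝ (Fin m) =>
        U (stmt18.toE (Fin.snoc (stmt18.fromE x')
          (Real.sqrt (R ^ 2 - ‖x' - a‖ ^ 2))))) := by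
  have hm2 : (2 : ℝ) ≤ m := by exact_mod_cast (by omega : 2 ≤ m)
  have hp : ((2 : ℝ) - ((m : ℝ) + 1)) / 2 ≤ 0 := by linarith
  have hc0 : 0 ≤ c := by
    rw [hc]
    have : 0 < ((m : ℝ) + 1 - 2) * S := mul_pos (by linarith) hS
    positivity
  have hae : ∀ᵐ y ∂μ, y (Fin.last m) = 0 := ae_iff.2 hplane
  refine ((convexOn_integral_hemisphereSqDist_rpow (μ.map hyperplaneProj) a R hp).smul hc0).congr
    fun x hx => ?_
  dsimp only
  rw [hU, smul_eq_mul, integral_map continuous_hyperplaneProj.aemeasurable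
    (continuous_hemisphereSqDist_rpow hx _).aestronglyMeasurable]
  refine congrArg (c * ·) (integral_congr_ae ?_)
  filter_upwards [hae] with y hy
  exact (norm_toE_snoc_sub_rpow (ball_subset_closedBall hx) hy _).symm

/-- The restriction of the Newtonian potential `U^μ` of a measure `μ` supported
in the hyperplane `{x_n = 0}` to an upper hemisphere centered at `(a,0)` with
radius `R`, viewed as a function of `x' ∈ B(a,R) ⊂ ℝ^{n−1}`, is convex.
Here `n = m + 1 ≥ 3`, the hyperplane is the first `m` coordinates, and
`c = 1/((n−2)|S^{n−1}|) > 0`. -/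
theorem stmt_18 {m : ℕ} (hm : 3 ≤ m + 1)
    (μ : Measure (EuclideanSpace ℝ (Fin (m + 1)))) [IsFiniteMeasure μ]
    (K : Set (EuclideanSpace ℝ (Fin (m + 1)))) (hK : IsCompact K) (hKμ : μ Kᶜ = 0)
    (hplane : μ {x | ¬ x (Fin.last m) = 0} = 0)
    (S c : ℝ) (hS : 0 < S) (hc : c = 1 / (((m : ℝ) + 1 - 2) * S))
    (U : EuclideanSpace ℝ (Fin (m + 1)) → ℝ)
    (hU : ∀ x, U x = c * ∫ y, ‖x - y‖ ^ ((2 : ℝ) - ((m : ℝ) + 1)) ∂μ)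
    (a : EuclideanSpace ℝ (Fin m)) (R : ℝ) (hR : 0 < R) :
    ConvexOn ℝ (Metric.ball a R)
      (fun x' : EuclideanSpace ℝ (Fin m) =>
        U (stmt18.toE (Fin.snoc (stmt18.fromE x')
          (Real.sqrt (R ^ 2 - ‖x' - a‖ ^ 2))))) :=
  stmt_18_general hm μ hplane S c hS hc U hU a R
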